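/- arXiv:2010.15100 — 5 statements merged into one kernel-verified Lean document; each statement's English description precedes it below -/
import Mathlib

section
/- Let μ : Ω → ℝ be integrable with respect to a probability measure P and let α ∈ (0,1). Then sup over measurable h : Ω → [0,1] with E_P[h] = 1−α of (1/(1−α))·E_P[h·μ] equals min over η ∈ ℝ of (1/(1−α))·E_P[(μ−η)₊] + η, where (x)₊ = max(x,0). -/
/-!
Pointwise, `t * x ≤ (x - η)₊ + η * t` for `t ∈ [0, 1]`; integrating against a selection `h`
of mass `1 - α` bounds every primal value by every dual value. Equality holds for
`h = 1_{μ > η}` as soon as `P (μ > η) = 1 - α`, and such an `η` exists because the law of `μ`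
has no atoms, so its cdf is continuous and takes the value `α`.
-/

open MeasureTheory ENNReal Set ProbabilityTheory

theorem continuous_cdf (ν : Measure ℝ) [IsProbabilityMeasure ν] [NullSingletonClass ν] :
    Continuous (cdf ν) := by
  refine continuous_iff_continuousAt.2 fun t ↦ ?_
  rw [(monotone_cdf ν).continuousAt_iff_leftLim_eq_rightLim, (cdf ν).rightLim_eq]
  have hjump := (cdf ν).measure_singleton t
  rw [measure_cdf, measure_singleton, eq_comm, ENNReal.ofReal_eq_zero] at hjump
  linarith [(monotone_cdf ν).leftLim_le (le_refl t)]

open Filter in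
theorem exists_cdf_eq (ν : Measure ℝ) [IsProbabilityMeasure ν] [NullSingletonClass ν]
    {c : ℝ} (hc : c ∈ Ioo (0 : ℝ) 1) : ∃ η, cdf ν η = c :=
  mem_range_of_exists_le_of_exists_ge (continuous_cdf ν)
    ((tendsto_cdf_atBot ν).eventually (eventually_le_nhds hc.1)).exists
    ((tendsto_cdf_atTop ν).eventually (eventually_ge_nhds hc.2)).exists

theorem exists_measureReal_lt_eq {Ω : Type*} [MeasurableSpace Ω] {P : Measure Ω}
    [IsProbabilityMeasure P] {X : Ω → ℝ} (hX : Measurable X)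
    (hatom : ∀ t : ℝ, P {ω | X ω = t} = 0) {c : ℝ} (hc : c ∈ Ioo (0 : ℝ) 1) :
    ∃ η, P.real {ω | η < X ω} = c := by
  have : IsProbabilityMeasure (P.map X) := Measure.isProbabilityMeasure_map hX.aemeasurable
  have : NullSingletonClass (P.map X) := ⟨fun t ↦ by
    rw [Measure.map_apply hX (measurableSet_singleton t)]; exact hatom t⟩
  obtain ⟨η, hη⟩ := exists_cdf_eq (P.map X) (c := 1 - c)
    ⟨by linarith [hc.2], by linarith [hc.1]⟩
  refine ⟨η, ?_⟩
  have hlt : {ω | η < X ω} = (X ⁻¹' Iic η)ᶜ := by ext; simp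
  rw [cdf_eq_real, map_measureReal_apply hX measurableSet_Iic] at hη
  rw [hlt, measureReal_compl (hX measurableSet_Iic), probReal_univ, hη]
  ring

theorem mul_le_max_sub_add {t : ℝ} (ht : t ∈ Icc (0 : ℝ) 1) (x η : ℝ) :
    t * x ≤ max (x - η) 0 + η * t := by
  rcases le_total 0 (x - η) with h | h
  · nlinarith [le_max_left (x - η) 0, ht.1, ht.2]
  · nlinarith [le_max_right (x - η) 0, ht.1, ht.2]

theorem integral_mul_le_integral_max_sub_add {Ω : Type*} [MeasurableSpace Ω] {P : Measure Ω}
    [IsFiniteMeasure P] {X h : Ω → ℝ} (hX : Integrable X P) (hh : AEStronglyMeasurable h P)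
    (h01 : ∀ ω, h ω ∈ Icc (0 : ℝ) 1) (η : ℝ) :
    ∫ ω, h ω * X ω ∂P ≤ ∫ ω, max (X ω - η) 0 ∂P + η * ∫ ω, h ω ∂P := by
  have hbound : ∀ ω, ‖h ω‖ ≤ 1 := fun ω ↦ by
    rw [Real.norm_of_nonneg (h01 ω).1]; exact (h01 ω).2
  have hhi : Integrable h P := .of_bound hh 1 (ae_of_all _ hbound)
  have hmax : Integrable (fun ω ↦ max (X ω - η) 0) P := (hX.sub (integrable_const η)).pos_part
  rw [← integral_const_mul, ← integral_add hmax (hhi.const_mul η)]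
  exact integral_mono (hX.bdd_mul hh (ae_of_all _ hbound))
    (hmax.add (hhi.const_mul η)) fun ω ↦ mul_le_max_sub_add (h01 ω) (X ω) η

theorem integral_indicator_mul_eq {Ω : Type*} [MeasurableSpace Ω] {P : Measure Ω}
    [IsFiniteMeasure P] {X : Ω → ℝ} (hX : Integrable X P) (hXm : Measurable X) (η : ℝ) :
    ∫ ω, {ω | η < X ω}.indicator 1 ω * X ω ∂P =
      ∫ ω, max (X ω - η) 0 ∂P + η * P.real {ω | η < X ω} := by
  have hA : MeasurableSet {ω | η < X ω} := measurableSet_lt measurable_const hXm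
  have hpt : ∀ ω, {ω | η < X ω}.indicator 1 ω * X ω =
      max (X ω - η) 0 + η * {ω | η < X ω}.indicator 1 ω := fun ω ↦ by
    by_cases hω : η < X ω
    · simp [indicator, hω, max_eq_left (sub_nonneg.2 hω.le)]
    · simp [indicator, hω, max_eq_right (sub_nonpos.2 (not_lt.1 hω))]
  have hmax : Integrable (fun ω ↦ max (X ω - η) 0) P := (hX.sub (integrable_const η)).pos_part
  have hind : Integrable ({ω | η < X ω}.indicator (1 : Ω → ℝ)) P :=
    (integrable_const 1).indicator hA
  simp_rw [hpt]
  rw [integral_add hmax (hind.const_mul η), integral_const_mul, integral_indicator_one hA]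

/-- Strong duality between the worst-case subpopulation risk and its CVaR dual
formulation (case `Z = ∅`): the supremum over selection functions `h` equals the
minimum of the dual objective, and the minimum is attained. -/
theorem stmt_1 {Ω : Type*} [MeasurableSpace Ω] (P : Measure Ω) [IsProbabilityMeasure P]
    (μ : Ω → ℝ) (hμm : Measurable μ) (hμi : Integrable μ P)
    (α : ℝ) (hα : α ∈ Ioo (0 : ℝ) 1)
    (hcont : ∀ t : ℝ, P {ω | μ ω = t} = 0) :
    sSup {r : ℝ | ∃ h : Ω → ℝ, Measurable h ∧ (∀ ω, h ω ∈ Icc (0 : ℝ) 1) ∧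
        (∫ ω, h ω ∂P) = 1 - α ∧ r = (1 - α)⁻¹ * ∫ ω, h ω * μ ω ∂P} =
      sInf {v : ℝ | ∃ η : ℝ, v = (1 - α)⁻¹ * (∫ ω, max (μ ω - η) 0 ∂P) + η} ∧
    sInf {v : ℝ | ∃ η : ℝ, v = (1 - α)⁻¹ * (∫ ω, max (μ ω - η) 0 ∂P) + η} ∈
      {v : ℝ | ∃ η : ℝ, v = (1 - α)⁻¹ * (∫ ω, max (μ ω - η) 0 ∂P) + η} := by
  set S := {r : ℝ | ∃ h : Ω → ℝ, Measurable h ∧ (∀ ω, h ω ∈ Icc (0 : ℝ) 1) ∧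
    (∫ ω, h ω ∂P) = 1 - α ∧ r = (1 - α)⁻¹ * ∫ ω, h ω * μ ω ∂P}
  set V := {v : ℝ | ∃ η : ℝ, v = (1 - α)⁻¹ * (∫ ω, max (μ ω - η) 0 ∂P) + η}
  have hα₁ : 0 < 1 - α := by linarith [hα.2]
  have rescale (I η : ℝ) : (1 - α)⁻¹ * (I + η * (1 - α)) = (1 - α)⁻¹ * I + η := by
    field_simp
  have weak : ∀ r ∈ S, ∀ v ∈ V, r ≤ v := by
    rintro r ⟨h, hh, h01, hmass, rfl⟩ v ⟨η, rfl⟩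
    have primal_le_dual := integral_mul_le_integral_max_sub_add hμi hh.aestronglyMeasurable h01 η
    rw [hmass] at primal_le_dual
    rw [← rescale]
    gcongr
  obtain ⟨η₀, hη₀⟩ :=
    exists_measureReal_lt_eq hμm hcont (c := 1 - α) ⟨hα₁, by linarith [hα.1]⟩
  have hA : MeasurableSet {ω | η₀ < μ ω} := measurableSet_lt measurable_const hμm
  set v₀ := (1 - α)⁻¹ * (∫ ω, max (μ ω - η₀) 0 ∂P) + η₀
  have hV : v₀ ∈ V := ⟨η₀, rfl⟩
  have hS : v₀ ∈ S := by
    refine ⟨{ω | η₀ < μ ω}.indicator 1, measurable_const.indicator hA, fun ω ↦ ?_, ?_, ?_⟩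
    · by_cases hω : η₀ < μ ω <;> simp [indicator, hω]
    · rw [integral_indicator_one hA, hη₀]
    · rw [integral_indicator_mul_eq hμi hμm, hη₀, rescale]
  rw [IsGreatest.csSup_eq ⟨hS, fun r hr ↦ weak r hr v₀ hV⟩,
    IsLeast.csInf_eq ⟨hV, fun v hv ↦ weak v₀ hS v hv⟩]
  exact ⟨rfl, hV⟩
end

section
/- Let μ : Ω → ℝ be integrable under probability measure P, α ∈ (0,1), and η₀ be an α-quantile of μ with P(μ = η₀) = 0. Then the indicator function h₀ = 1[μ > η₀] satisfies E_P[h₀] = 1−α and achieves the supremum of (1/(1−α))·E_P[h·μ] over all measurable h : Ω → [0,1] with E_P[h] = 1−α. -/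
open MeasureTheory ENNReal Set

/-
Bathtub principle: since `0 ≤ h ≤ 1`, pointwise `h * (μ - η₀) ≤ 1[η₀ < μ] * (μ - η₀)`.
Integrating, and using that `h` and the indicator have the same mass `1 - α`, the terms
`η₀ * ∫ h` and `η₀ * ∫ 1[η₀ < μ]` cancel, leaving `∫ h * μ ≤ ∫ 1[η₀ < μ] * μ`.
-/

lemma mul_sub_le_ite_mul_sub {x m η : ℝ} (hx : x ∈ Icc (0 : ℝ) 1) :
    x * (m - η) ≤ (if η < m then 1 else 0) * (m - η) := by
  obtain ⟨hx0, hx1⟩ := hx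
  split_ifs <;> nlinarith

section

variable {Ω : Type*} [MeasurableSpace Ω] {P : Measure Ω}

lemma integral_mul_sub_const [IsFiniteMeasure P] {f g : Ω → ℝ} (hf : Integrable f P)
    (hg : AEStronglyMeasurable g P) {C : ℝ} (hgC : ∀ᵐ ω ∂P, ‖g ω‖ ≤ C) (c : ℝ) :
    ∫ ω, g ω * (f ω - c) ∂P = ∫ ω, g ω * f ω ∂P - c * ∫ ω, g ω ∂P := by
  simp_rw [mul_sub, mul_comm _ c]
  rw [integral_sub (hf.bdd_mul hg hgC) ((Integrable.of_bound hg C hgC).const_mul c),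
    integral_const_mul]

lemma integral_ite_lt_eq_one_sub [IsProbabilityMeasure P] {f : Ω → ℝ} (hf : Measurable f)
    (η : ℝ) :
    ∫ ω, (if η < f ω then (1 : ℝ) else 0) ∂P = 1 - P.real {ω | f ω ≤ η} := by
  have hcompl : {ω | η < f ω} = {ω | f ω ≤ η}ᶜ := by ext ω; simp
  have hind : (fun ω => if η < f ω then (1 : ℝ) else 0) = {ω | η < f ω}.indicator 1 := by
    ext ω; simp [indicator]
  rw [hind, integral_indicator_one (measurableSet_lt measurable_const hf), hcompl,
    probReal_compl_eq_one_sub (measurableSet_le hf measurable_const)]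

theorem integral_mul_le_integral_ite_mul [IsFiniteMeasure P] {f h : Ω → ℝ} (hfm : Measurable f)
    (hf : Integrable f P) (hh : AEStronglyMeasurable h P) (h01 : ∀ ω, h ω ∈ Icc (0 : ℝ) 1)
    (η : ℝ) (hmass : ∫ ω, h ω ∂P = ∫ ω, (if η < f ω then (1 : ℝ) else 0) ∂P) :
    ∫ ω, h ω * f ω ∂P ≤ ∫ ω, (if η < f ω then (1 : ℝ) else 0) * f ω ∂P := by
  set t : Ω → ℝ := fun ω => if η < f ω then 1 else 0
  have ht : AEStronglyMeasurable t P :=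
    (Measurable.ite (measurableSet_lt measurable_const hfm) measurable_const
      measurable_const).aestronglyMeasurable
  have ht1 : ∀ᵐ ω ∂P, ‖t ω‖ ≤ 1 := .of_forall fun ω => by
    by_cases hω : η < f ω <;> simp [t, hω]
  have hh1 : ∀ᵐ ω ∂P, ‖h ω‖ ≤ 1 := .of_forall fun ω => by
    rw [Real.norm_of_nonneg (h01 ω).1]; exact (h01 ω).2
  have hmono : ∫ ω, h ω * (f ω - η) ∂P ≤ ∫ ω, t ω * (f ω - η) ∂P :=
    integral_mono ((hf.sub (integrable_const η)).bdd_mul hh hh1)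
      ((hf.sub (integrable_const η)).bdd_mul ht ht1) fun ω => mul_sub_le_ite_mul_sub (h01 ω)
  rw [integral_mul_sub_const hf hh hh1, integral_mul_sub_const hf ht ht1, hmass] at hmono
  linarith

end

theorem stmt_3_general {Ω : Type*} [MeasurableSpace Ω] (P : Measure Ω) [IsProbabilityMeasure P]
    (μ : Ω → ℝ) (hμm : Measurable μ) (hμi : Integrable μ P)
    (α : ℝ) (hα : α ∈ Ioo (0 : ℝ) 1)
    (η₀ : ℝ) (hquant : P {ω | μ ω ≤ η₀} = ENNReal.ofReal α)
    (h₀ : Ω → ℝ) (hh₀ : h₀ = fun ω => if η₀ < μ ω then 1 else 0) :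
    (∫ ω, h₀ ω ∂P) = 1 - α ∧
    ∀ h : Ω → ℝ, Measurable h → (∀ ω, h ω ∈ Icc (0 : ℝ) 1) →
      (∫ ω, h ω ∂P) = 1 - α →
      (1 - α)⁻¹ * (∫ ω, h ω * μ ω ∂P) ≤ (1 - α)⁻¹ * (∫ ω, h₀ ω * μ ω ∂P) := by
  obtain ⟨hα0, hα1⟩ := hα
  subst hh₀
  have hmass : ∫ ω, (if η₀ < μ ω then (1 : ℝ) else 0) ∂P = 1 - α := by
    rw [integral_ite_lt_eq_one_sub hμm, measureReal_def, hquant, toReal_ofReal hα0.le]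
  refine ⟨hmass, fun h hm h01 hint => ?_⟩
  exact mul_le_mul_of_nonneg_left
    (integral_mul_le_integral_ite_mul hμm hμi hm.aestronglyMeasurable h01 η₀
      (hint.trans hmass.symm))
    (inv_nonneg.2 (by linarith))

/-- The worst `(1-α)`-subsample is selected by thresholding at the `α`-quantile:
`h₀ = 1[μ > η₀]` is feasible and achieves the supremum. -/
theorem stmt_3 {Ω : Type*} [MeasurableSpace Ω] (P : Measure Ω) [IsProbabilityMeasure P]
    (μ : Ω → ℝ) (hμm : Measurable μ) (hμi : Integrable μ P)
    (α : ℝ) (hα : α ∈ Ioo (0 : ℝ) 1)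
    (η₀ : ℝ) (hquant : P {ω | μ ω ≤ η₀} = ENNReal.ofReal α)
    (hatom : P {ω | μ ω = η₀} = 0)
    (h₀ : Ω → ℝ) (hh₀ : h₀ = fun ω => if η₀ < μ ω then 1 else 0) :
    (∫ ω, h₀ ω ∂P) = 1 - α ∧
    ∀ h : Ω → ℝ, Measurable h → (∀ ω, h ω ∈ Icc (0 : ℝ) 1) →
      (∫ ω, h ω ∂P) = 1 - α →
      (1 - α)⁻¹ * (∫ ω, h ω * μ ω ∂P) ≤ (1 - α)⁻¹ * (∫ ω, h₀ ω * μ ω ∂P) :=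
  stmt_3_general P μ hμm hμi α hα η₀ hquant h₀ hh₀
end

section
/- Let μ : Ω → ℝ be a bounded measurable function, α ∈ (0,1), ε > 0, and U be a random variable uniform on [0, ε], independent of everything else. Define R_α = sup over measurable h : Ω → [0,1] with E[h] = 1−α of (1/(1−α))·E[h·μ], and R_{α,ε} the analogous supremum where μ is replaced by μ + U and h may additionally depend on U. Then R_α ≤ R_{α,ε} ≤ R_α + ε. -/
/-!
A test function `h` on `Ω` is also a test function on `Ω × [0, ε]` that ignores the noise, and
the noise only increases the loss, so `R_α ≤ R_{α,ε}`. Conversely, averaging a test function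
`h(ω, u)` over the noise `u` gives a test function on `Ω` with the same mass and the same
`E[h · μ]`, while the noise contributes at most `ε · E[h] = ε (1 - α)`; after normalising by
`(1 - α)⁻¹` this is the additive `ε`.
-/

open MeasureTheory ENNReal Set

lemma csSup_le_csSup_add {s t : Set ℝ} {c : ℝ} (hs : s.Nonempty) (ht : BddAbove t)
    (hst : ∀ a ∈ s, ∃ b ∈ t, a ≤ b + c) : sSup s ≤ sSup t + c :=
  csSup_le hs fun a ha =>
    let ⟨_, hb, hab⟩ := hst a ha
    hab.trans (by grw [le_csSup ht hb])

/-- The worst-case risk `R_α` is `sSup (riskValues P μ α)`. -/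
def riskValues {X : Type*} [MeasurableSpace X] (Q : Measure X) (f : X → ℝ) (α : ℝ) : Set ℝ :=
  {r | ∃ h : X → ℝ, Measurable h ∧ (∀ x, h x ∈ Icc (0 : ℝ) 1) ∧
    (∫ x, h x ∂Q) = 1 - α ∧ r = (1 - α)⁻¹ * ∫ x, h x * f x ∂Q}

section

variable {X Y : Type*} [MeasurableSpace X] [MeasurableSpace Y] {Q : Measure X} {ν : Measure Y}
  {f g h : X → ℝ} {α : ℝ}

lemma ae_norm_le_one_of_mem_Icc (h01 : ∀ x, h x ∈ Icc (0 : ℝ) 1) : ∀ᵐ x ∂Q, ‖h x‖ ≤ 1 :=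
  .of_forall fun x => by simpa [abs_of_nonneg (h01 x).1] using (h01 x).2

lemma MeasureTheory.Integrable.mul_of_mem_Icc (hf : Integrable f Q) (hh : Measurable h)
    (h01 : ∀ x, h x ∈ Icc (0 : ℝ) 1) : Integrable (fun x => h x * f x) Q :=
  hf.bdd_mul hh.aestronglyMeasurable (ae_norm_le_one_of_mem_Icc h01)

lemma integral_mul_le_integral_mul (hh : Measurable h) (h01 : ∀ x, h x ∈ Icc (0 : ℝ) 1)
    (hf : Integrable f Q) (hg : Integrable g Q) (hfg : f ≤ᵐ[Q] g) :
    ∫ x, h x * f x ∂Q ≤ ∫ x, h x * g x ∂Q :=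
  integral_mono_ae (hf.mul_of_mem_Icc hh h01) (hg.mul_of_mem_Icc hh h01) <|
    hfg.mono fun x hx => mul_le_mul_of_nonneg_left hx (h01 x).1

lemma integral_mem_Icc_zero_one [IsProbabilityMeasure Q] (h01 : ∀ x, h x ∈ Icc (0 : ℝ) 1) :
    ∫ x, h x ∂Q ∈ Icc (0 : ℝ) 1 := by
  refine ⟨integral_nonneg fun x => (h01 x).1, ?_⟩
  simpa using (Real.le_norm_self _).trans
    (norm_integral_le_of_norm_le_const (μ := Q) (ae_norm_le_one_of_mem_Icc h01))

lemma integral_prod_mul_comp_fst [SFinite Q] [SFinite ν] {k : X × Y → ℝ}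
    (hint : Integrable (fun p => k p * f p.1) (Q.prod ν)) :
    ∫ p, k p * f p.1 ∂Q.prod ν = ∫ x, (∫ y, k (x, y) ∂ν) * f x ∂Q := by
  rw [integral_prod _ hint]
  simp_rw [integral_mul_const]

lemma riskValues_nonempty [IsProbabilityMeasure Q] (hα : α ∈ Icc (0 : ℝ) 1) :
    (riskValues Q f α).Nonempty :=
  ⟨_, fun _ => 1 - α, measurable_const, fun _ => ⟨by linarith [hα.2], by linarith [hα.1]⟩,
    by simp, rfl⟩

lemma bddAbove_riskValues [IsFiniteMeasure Q] {C : ℝ} (hC : ∀ᵐ x ∂Q, |f x| ≤ C) :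
    BddAbove (riskValues Q f α) := by
  refine ⟨|(1 - α)⁻¹| * (C * Q.real univ), ?_⟩
  rintro _ ⟨h, -, h01, -, rfl⟩
  have hhf : ‖∫ x, h x * f x ∂Q‖ ≤ C * Q.real univ := by
    refine norm_integral_le_of_norm_le_const (hC.mono fun x hx => ?_)
    rw [norm_mul, Real.norm_eq_abs, Real.norm_eq_abs, abs_of_nonneg (h01 x).1]
    exact (mul_le_of_le_one_left (abs_nonneg _) (h01 x).2).trans hx
  calc (1 - α)⁻¹ * ∫ x, h x * f x ∂Q ≤ |(1 - α)⁻¹ * ∫ x, h x * f x ∂Q| := le_abs_self _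
    _ ≤ |(1 - α)⁻¹| * (C * Q.real univ) := by
      rw [abs_mul]; exact mul_le_mul_of_nonneg_left hhf (abs_nonneg _)

variable {ξ : Y → ℝ}

lemma exists_riskValues_prod_ge [IsFiniteMeasure Q] [IsProbabilityMeasure ν] (hα : α < 1)
    (hf : Integrable f Q) (hξ : Integrable ξ ν) (hξ0 : 0 ≤ᵐ[ν] ξ) {r : ℝ}
    (hr : r ∈ riskValues Q f α) :
    ∃ s ∈ riskValues (Q.prod ν) (fun p => f p.1 + ξ p.2) α, r ≤ s := by
  obtain ⟨h, hh, h01, hmass, rfl⟩ := hr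
  refine ⟨_, ⟨fun p => h p.1, hh.comp measurable_fst, fun p => h01 p.1,
    by simpa [integral_fun_fst] using hmass, rfl⟩, ?_⟩
  refine mul_le_mul_of_nonneg_left ?_ (inv_nonneg.2 (sub_nonneg.2 hα.le))
  calc ∫ x, h x * f x ∂Q = ∫ p, h p.1 * (f p.1 + 0) ∂Q.prod ν := by
        simp [integral_fun_fst (f := fun x => h x * f x)]
    _ ≤ ∫ p, h p.1 * (f p.1 + ξ p.2) ∂Q.prod ν :=
      integral_mul_le_integral_mul (hh.comp measurable_fst) (fun p => h01 p.1)
        (by simpa using hf.comp_fst ν) ((hf.comp_fst ν).add (hξ.comp_snd Q))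
        (Measure.quasiMeasurePreserving_snd.ae hξ0 |>.mono fun p hp => by simpa using hp)

lemma exists_riskValues_le_add [IsFiniteMeasure Q] [IsProbabilityMeasure ν] (hα : α < 1)
    (hf : Integrable f Q) (hξ : Integrable ξ ν) {ε : ℝ} (hξε : ∀ᵐ y ∂ν, ξ y ≤ ε) {s : ℝ}
    (hs : s ∈ riskValues (Q.prod ν) (fun p => f p.1 + ξ p.2) α) :
    ∃ r ∈ riskValues Q f α, s ≤ r + ε := by
  obtain ⟨k, hk, k01, hmass, rfl⟩ := hs
  have hki : Integrable k (Q.prod ν) := by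
    simpa using (integrable_const (1 : ℝ)).mul_of_mem_Icc hk k01
  have hkf : Integrable (fun p => k p * f p.1) (Q.prod ν) := (hf.comp_fst ν).mul_of_mem_Icc hk k01
  refine ⟨_, ⟨fun x => ∫ y, k (x, y) ∂ν, hk.stronglyMeasurable.integral_prod_right'.measurable,
    fun x => integral_mem_Icc_zero_one fun y => k01 (x, y), by rw [← hmass, integral_prod _ hki],
    rfl⟩, ?_⟩
  have h1α : 1 - α ≠ 0 := sub_ne_zero.2 hα.ne'
  have hnoise : ∫ p, k p * (f p.1 + ξ p.2) ∂Q.prod ν ≤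
      ∫ x, (∫ y, k (x, y) ∂ν) * f x ∂Q + ε * (1 - α) :=
    calc ∫ p, k p * (f p.1 + ξ p.2) ∂Q.prod ν ≤ ∫ p, k p * (f p.1 + ε) ∂Q.prod ν :=
          integral_mul_le_integral_mul hk k01 ((hf.comp_fst ν).add (hξ.comp_snd Q))
            ((hf.comp_fst ν).add (integrable_const ε))
            (Measure.quasiMeasurePreserving_snd.ae hξε |>.mono fun p hp => by simpa using hp)
      _ = ∫ p, k p * f p.1 ∂Q.prod ν + ε * ∫ p, k p ∂Q.prod ν := by
          simp_rw [mul_add]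
          rw [integral_add hkf (hki.mul_const ε), integral_mul_const, mul_comm]
      _ = _ := by rw [integral_prod_mul_comp_fst hkf, hmass]
  calc (1 - α)⁻¹ * ∫ p, k p * (f p.1 + ξ p.2) ∂Q.prod ν
      ≤ (1 - α)⁻¹ * (∫ x, (∫ y, k (x, y) ∂ν) * f x ∂Q + ε * (1 - α)) :=
        mul_le_mul_of_nonneg_left hnoise (inv_nonneg.2 (sub_nonneg.2 hα.le))
    _ = _ := by field_simp

end

theorem stmt_4_general {Ω : Type*} [MeasurableSpace Ω] (P : Measure Ω) [IsProbabilityMeasure P]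
    (μ : Ω → ℝ) (hμm : Measurable μ) (hμb : ∃ M : ℝ, ∀ ω, |μ ω| ≤ M)
    (α : ℝ) (hα : α ∈ Ioo (0 : ℝ) 1) (ε : ℝ)
    (ν : Measure ℝ) (hν : ν = (ENNReal.ofReal ε)⁻¹ • (volume.restrict (Icc (0 : ℝ) ε)))
    [IsProbabilityMeasure ν]
    (Rα Rαε : ℝ)
    (hRα : Rα = sSup {r : ℝ | ∃ h : Ω → ℝ, Measurable h ∧ (∀ ω, h ω ∈ Icc (0 : ℝ) 1) ∧
        (∫ ω, h ω ∂P) = 1 - α ∧ r = (1 - α)⁻¹ * ∫ ω, h ω * μ ω ∂P})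
    (hRαε : Rαε = sSup {r : ℝ | ∃ h : Ω × ℝ → ℝ, Measurable h ∧
        (∀ p, h p ∈ Icc (0 : ℝ) 1) ∧
        (∫ p, h p ∂(P.prod ν)) = 1 - α ∧
        r = (1 - α)⁻¹ * ∫ p, h p * (μ p.1 + p.2) ∂(P.prod ν)}) :
    Rα ≤ Rαε ∧ Rαε ≤ Rα + ε := by
  obtain ⟨M, hM⟩ := hμb
  have hnoise : ∀ᵐ u ∂ν, u ∈ Icc 0 ε := by
    rw [hν]; exact Measure.ae_smul_measure (ae_restrict_mem measurableSet_Icc) _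
  have hid : Integrable id ν := .of_bound measurable_id.aestronglyMeasurable ε
    (hnoise.mono fun u hu => by simpa [abs_of_nonneg hu.1] using hu.2)
  have hμi : Integrable μ P := .of_bound hμm.aestronglyMeasurable M (.of_forall hM)
  have hloss : ∀ᵐ p ∂P.prod ν, |μ p.1 + p.2| ≤ M + ε :=
    Measure.quasiMeasurePreserving_snd.ae hnoise |>.mono fun p hp =>
      (abs_add_le _ _).trans (add_le_add (hM p.1) ((abs_of_nonneg hp.1).trans_le hp.2))
  have hα' : α ∈ Icc (0 : ℝ) 1 := Ioo_subset_Icc_self hα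
  subst hRα hRαε
  constructor
  · have := csSup_le_csSup_add (c := 0) (riskValues_nonempty hα') (bddAbove_riskValues hloss)
      fun r hr => (exists_riskValues_prod_ge hα.2 hμi hid (hnoise.mono fun _ hu => hu.1) hr).imp
        fun s hs => ⟨hs.1, (add_zero s).symm ▸ hs.2⟩
    rwa [add_zero] at this
  · exact csSup_le_csSup_add (riskValues_nonempty hα') (bddAbove_riskValues (.of_forall hM))
      fun s hs => exists_riskValues_le_add hα.2 hμi hid (hnoise.mono fun _ hu => hu.2) hs

/-- Bias bound for the noise-augmentation procedure: adding independent
`Uniform(0,ε)` noise to the (bounded) conditional expected loss never decreases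
the worst-case risk and increases it by at most `ε`. -/
theorem stmt_4 {Ω : Type*} [MeasurableSpace Ω] (P : Measure Ω) [IsProbabilityMeasure P]
    (μ : Ω → ℝ) (hμm : Measurable μ) (hμb : ∃ M : ℝ, ∀ ω, |μ ω| ≤ M)
    (α : ℝ) (hα : α ∈ Ioo (0 : ℝ) 1) (ε : ℝ) (hε : 0 < ε)
    (ν : Measure ℝ) (hν : ν = (ENNReal.ofReal ε)⁻¹ • (volume.restrict (Icc (0 : ℝ) ε)))
    [IsProbabilityMeasure ν]
    (Rα Rαε : ℝ)
    (hRα : Rα = sSup {r : ℝ | ∃ h : Ω → ℝ, Measurable h ∧ (∀ ω, h ω ∈ Icc (0 : ℝ) 1) ∧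
        (∫ ω, h ω ∂P) = 1 - α ∧ r = (1 - α)⁻¹ * ∫ ω, h ω * μ ω ∂P})
    (hRαε : Rαε = sSup {r : ℝ | ∃ h : Ω × ℝ → ℝ, Measurable h ∧
        (∀ p, h p ∈ Icc (0 : ℝ) 1) ∧
        (∫ p, h p ∂(P.prod ν)) = 1 - α ∧
        r = (1 - α)⁻¹ * ∫ p, h p * (μ p.1 + p.2) ∂(P.prod ν)}) :
    Rα ≤ Rαε ∧ Rαε ≤ Rα + ε :=
  stmt_4_general P μ hμm hμb α hα ε ν hν Rα Rαε hRα hRαε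
end

section
/- Let (Ω, F, P) be a probability space, let Z ⊆ G be sub-σ-algebras of F, let ℓ be an integrable random variable, and let α ∈ (0,1). Let μ₀ = E[ℓ | G], let η₀ be Z-measurable, and let h₀ = 1[μ₀ ≥ η₀], so that h₀ is G-measurable with values in {0,1}, and suppose E[h₀ | Z] = 1−α a.e. Define ψ = (1/(1−α))·((μ₀ − η₀)₊ + h₀·(ℓ − μ₀)) + η₀ − R, where R = E[(1/(1−α))·(μ₀ − η₀)₊ + η₀]. Then E_P[ψ] = 0. -/
open MeasureTheory ENNReal Set

/-- The debiased score function has mean zero at the true parameters. -/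
theorem stmt_5 {Ω : Type*} {mΩ : MeasurableSpace Ω} (P : Measure Ω) [IsProbabilityMeasure P]
    (Z G : MeasurableSpace Ω) (hZG : Z ≤ G) (hG : G ≤ mΩ)
    (α : ℝ) (hα : α ∈ Ioo (0 : ℝ) 1)
    (ℓ : Ω → ℝ) (hℓ : Integrable ℓ P)
    (η₀ : Ω → ℝ) (hη₀m : StronglyMeasurable[Z] η₀) (hη₀i : Integrable η₀ P)
    (μ₀ : Ω → ℝ) (hμ₀ : μ₀ = P[ℓ | G])
    (h₀ : Ω → ℝ) (hh₀ : h₀ = fun ω => if η₀ ω ≤ μ₀ ω then 1 else 0)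
    (hcond : P[h₀ | Z] =ᵐ[P] fun _ => 1 - α)
    (R : ℝ) (hR : R = ∫ ω, ((1 - α)⁻¹ * max (μ₀ ω - η₀ ω) 0 + η₀ ω) ∂P) :
    (∫ ω, ((1 - α)⁻¹ * (max (μ₀ ω - η₀ ω) 0 + h₀ ω * (ℓ ω - μ₀ ω)) + η₀ ω - R) ∂P) = 0 := by
  have hμ₀m : StronglyMeasurable[G] μ₀ := hμ₀ ▸ stronglyMeasurable_condExp
  have hμ₀i : Integrable μ₀ P := hμ₀ ▸ integrable_condExp
  have hη₀G : StronglyMeasurable[G] η₀ := hη₀m.mono hZG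
  have hsetG : MeasurableSet[G] {ω | η₀ ω ≤ μ₀ ω} := by
    exact measurableSet_le hη₀G.measurable hμ₀m.measurable
  have hh₀m : StronglyMeasurable[G] h₀ := by
    rw [hh₀]
    exact StronglyMeasurable.ite hsetG stronglyMeasurable_const stronglyMeasurable_const
  have hh₀bd : ∀ ω, ‖h₀ ω‖ ≤ 1 := by
    intro ω; rw [hh₀]; dsimp only; split <;> simp
  have hgi : Integrable (fun ω => ℓ ω - μ₀ ω) P := hℓ.sub hμ₀i
  have hprodi : Integrable (fun ω => h₀ ω * (ℓ ω - μ₀ ω)) P :=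
    hgi.bdd_mul (c := 1) ((hh₀m.mono hG).aestronglyMeasurable) (ae_of_all _ hh₀bd)
  -- conditional expectation of ℓ - μ₀ is 0
  have hcz : P[fun ω => ℓ ω - μ₀ ω | G] =ᵐ[P] 0 := by
    have h1 : P[fun ω => ℓ ω - μ₀ ω | G] =ᵐ[P] P[ℓ|G] - P[μ₀|G] := condExp_sub hℓ hμ₀i G
    have h2 : P[μ₀|G] = μ₀ := condExp_of_stronglyMeasurable hG hμ₀m hμ₀i
    filter_upwards [h1] with ω h1
    rw [h1, Pi.sub_apply, h2, hμ₀, sub_self]; rfl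
  have hkey : (∫ ω, h₀ ω * (ℓ ω - μ₀ ω) ∂P) = 0 := by
    rw [← integral_condExp (f := fun ω => h₀ ω * (ℓ ω - μ₀ ω)) hG]
    have hmul : P[fun ω => h₀ ω * (ℓ ω - μ₀ ω) | G]
        =ᵐ[P] fun ω => h₀ ω * (P[fun ω => ℓ ω - μ₀ ω | G]) ω :=
      condExp_mul_of_stronglyMeasurable_left hh₀m hprodi hgi
    have : P[fun ω => h₀ ω * (ℓ ω - μ₀ ω) | G] =ᵐ[P] 0 := by
      filter_upwards [hmul, hcz] with ω h1 h2
      simp [h1, h2]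
    rw [integral_congr_ae this]
    simp
  have hmaxi : Integrable (fun ω => max (μ₀ ω - η₀ ω) 0) P :=
    (hμ₀i.sub hη₀i).pos_part
  have e : ∀ ω, (1 - α)⁻¹ * (max (μ₀ ω - η₀ ω) 0 + h₀ ω * (ℓ ω - μ₀ ω)) + η₀ ω - R
      = ((1 - α)⁻¹ * max (μ₀ ω - η₀ ω) 0 + η₀ ω) + (1 - α)⁻¹ * (h₀ ω * (ℓ ω - μ₀ ω)) - R := by
    intro ω; ring
  have i1 : Integrable (fun ω => (1 - α)⁻¹ * max (μ₀ ω - η₀ ω) 0 + η₀ ω) P := by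
    exact (hmaxi.const_mul _).add hη₀i
  have i2 : Integrable (fun ω => (1 - α)⁻¹ * (h₀ ω * (ℓ ω - μ₀ ω))) P := hprodi.const_mul _
  have itot : Integrable (fun ω => (1 - α)⁻¹ * max (μ₀ ω - η₀ ω) 0 + η₀ ω
      + (1 - α)⁻¹ * (h₀ ω * (ℓ ω - μ₀ ω))) P := by exact i1.add i2
  simp_rw [e]
  rw [integral_sub itot (integrable_const R), integral_add i1 i2,
    integral_const_mul, hkey, hR]
  simp
end

section
/- Let P be a probability measure, α ∈ (0,1), Z a sub-σ-algebra, μ₀ integrable and G-measurable for some σ-algebra G ⊇ Z, and η₀ a Z-measurable version of the conditional α-quantile of μ₀ given Z with P(μ₀ = η₀) = 0 and P(μ₀ > η₀ | Z) = 1−α a.e. Then sup over G-measurable h : Ω → [0,1] with E_P[h | Z] = 1−α a.e. of (1/(1−α))·E_P[h·μ₀] is attained by h₀ = 1[μ₀ > η₀], and equals E_P[(1/(1−α))·(μ₀ − η₀)₊ + η₀]. -/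
open MeasureTheory Set

/-!
Write `∫ h μ₀ = ∫ h (μ₀ - η₀) + ∫ h η₀`. Since `η₀` is `Z`-measurable, the constraint
`E[h | Z] = 1 - α` fixes the second term to `(1 - α) ∫ η₀` for every admissible `h`. The first
term is bounded pointwise, as `0 ≤ h ≤ 1`, by `(μ₀ - η₀)₊ = h₀ (μ₀ - η₀)`, so `h₀` is optimal and
its value is `∫ (μ₀ - η₀)₊ + (1 - α) ∫ η₀`.
-/

lemma mul_le_max_zero_of_mem_Icc {t x : ℝ} (ht : t ∈ Icc (0 : ℝ) 1) : t * x ≤ max x 0 := by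
  rcases le_or_gt x 0 with hx | hx
  · exact (mul_nonpos_of_nonneg_of_nonpos ht.1 hx).trans (le_max_right _ _)
  · exact (mul_le_of_le_one_left hx.le ht.2).trans (le_max_left _ _)

lemma ite_lt_mul_sub_eq_max_zero (a b : ℝ) :
    (if b < a then (1 : ℝ) else 0) * (a - b) = max (a - b) 0 := by
  split_ifs with h
  · rw [one_mul, max_eq_left (sub_nonneg.2 h.le)]
  · rw [zero_mul, max_eq_right (sub_nonpos.2 (not_lt.1 h))]

section

variable {Ω : Type*} {m mΩ : MeasurableSpace Ω} {P : Measure Ω}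

lemma MeasureTheory.Integrable.mul_of_mem_Icc_s17 {f g : Ω → ℝ} (hf : Integrable f P)
    (hg : AEStronglyMeasurable g P) (hg01 : ∀ ω, g ω ∈ Icc (0 : ℝ) 1) :
    Integrable (fun ω => g ω * f ω) P :=
  hf.bdd_mul (c := 1) hg <| .of_forall fun ω => by
    rw [Real.norm_eq_abs, abs_le]
    exact ⟨by linarith [(hg01 ω).1], (hg01 ω).2⟩

lemma integral_mul_eq_mul_integral_of_condExp_eq_const [IsFiniteMeasure P] (hm : m ≤ mΩ)
    {f g : Ω → ℝ} {c : ℝ} (hf : StronglyMeasurable[m] f) (hfg : Integrable (f * g) P)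
    (hg : Integrable g P) (hgc : P[g | m] =ᵐ[P] fun _ => c) :
    ∫ ω, f ω * g ω ∂P = c * ∫ ω, f ω ∂P := by
  have hpull : P[f * g | m] =ᵐ[P] fun ω => c * f ω := by
    filter_upwards [condExp_mul_of_stronglyMeasurable_left hf hfg hg, hgc] with ω h1 h2
    rw [h1, Pi.mul_apply, h2, mul_comm]
  calc ∫ ω, f ω * g ω ∂P = ∫ ω, P[f * g | m] ω ∂P := (integral_condExp hm).symm
    _ = c * ∫ ω, f ω ∂P := by rw [integral_congr_ae hpull, integral_const_mul]

lemma integral_mul_eq_integral_mul_sub_add [IsFiniteMeasure P] (hm : m ≤ mΩ)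
    {g μ η : Ω → ℝ} {c : ℝ} (hg : AEStronglyMeasurable g P) (hg01 : ∀ ω, g ω ∈ Icc (0 : ℝ) 1)
    (hgc : P[g | m] =ᵐ[P] fun _ => c) (hμ : Integrable μ P)
    (hηm : StronglyMeasurable[m] η) (hη : Integrable η P) :
    ∫ ω, g ω * μ ω ∂P = ∫ ω, g ω * (μ ω - η ω) ∂P + c * ∫ ω, η ω ∂P := by
  have hgη : Integrable (fun ω => g ω * η ω) P := hη.mul_of_mem_Icc_s17 hg hg01
  have hμη : Integrable (fun ω => μ ω - η ω) P := hμ.sub hη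
  have hηg : ∫ ω, η ω * g ω ∂P = c * ∫ ω, η ω ∂P := by
    refine integral_mul_eq_mul_integral_of_condExp_eq_const hm hηm ?_ ?_ hgc
    · rw [mul_comm]; exact hgη
    · simpa using (integrable_const (1 : ℝ)).mul_of_mem_Icc_s17 hg hg01
  calc ∫ ω, g ω * μ ω ∂P = ∫ ω, g ω * (μ ω - η ω) + g ω * η ω ∂P := by
        simp only [← mul_add, sub_add_cancel]
    _ = ∫ ω, g ω * (μ ω - η ω) ∂P + c * ∫ ω, η ω ∂P := by
      rw [integral_add (hμη.mul_of_mem_Icc_s17 hg hg01) hgη, ← hηg]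
      simp only [mul_comm]

end

theorem stmt_17_general {Ω : Type*} {mΩ : MeasurableSpace Ω} (P : Measure Ω) [IsProbabilityMeasure P]
    (Z G : MeasurableSpace Ω) (hZG : Z ≤ G) (hG : G ≤ mΩ)
    (α : ℝ) (hα : α ∈ Ioo (0 : ℝ) 1)
    (μ₀ : Ω → ℝ) (hμ₀m : Measurable[G] μ₀) (hμ₀i : Integrable μ₀ P)
    (η₀ : Ω → ℝ) (hη₀m : StronglyMeasurable[Z] η₀) (hη₀i : Integrable η₀ P)
    (h₀ : Ω → ℝ) (hh₀ : h₀ = fun ω => if η₀ ω < μ₀ ω then 1 else 0)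
    (hquant : P[h₀ | Z] =ᵐ[P] fun _ => 1 - α) :
    IsGreatest
      {r : ℝ | ∃ h : Ω → ℝ, Measurable[G] h ∧ (∀ ω, h ω ∈ Icc (0 : ℝ) 1) ∧
        (P[h | Z] =ᵐ[P] fun _ => 1 - α) ∧
        r = (1 - α)⁻¹ * ∫ ω, h ω * μ₀ ω ∂P}
      ((1 - α)⁻¹ * ∫ ω, h₀ ω * μ₀ ω ∂P) ∧
    (1 - α)⁻¹ * (∫ ω, h₀ ω * μ₀ ω ∂P) =
      ∫ ω, ((1 - α)⁻¹ * max (μ₀ ω - η₀ ω) 0 + η₀ ω) ∂P := by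
  have hα1 : 0 < 1 - α := sub_pos.2 hα.2
  have hh₀m : Measurable[G] h₀ := hh₀ ▸
    Measurable.ite (measurableSet_lt (hη₀m.measurable.mono hZG le_rfl) hμ₀m) measurable_const
      measurable_const
  have hh₀01 : ∀ ω, h₀ ω ∈ Icc (0 : ℝ) 1 := fun ω => by
    subst hh₀; dsimp only; split_ifs <;> simp
  have hh₀pos : ∀ ω, h₀ ω * (μ₀ ω - η₀ ω) = max (μ₀ ω - η₀ ω) 0 := fun ω => by
    subst hh₀; exact ite_lt_mul_sub_eq_max_zero _ _
  have hsplit : ∀ {h : Ω → ℝ}, Measurable[G] h → (∀ ω, h ω ∈ Icc (0 : ℝ) 1) →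
      (P[h | Z] =ᵐ[P] fun _ => 1 - α) →
      ∫ ω, h ω * μ₀ ω ∂P = ∫ ω, h ω * (μ₀ ω - η₀ ω) ∂P + (1 - α) * ∫ ω, η₀ ω ∂P :=
    fun hm h01 hc => integral_mul_eq_integral_mul_sub_add (hZG.trans hG)
      (hm.mono hG le_rfl).aestronglyMeasurable h01 hc hμ₀i hη₀m hη₀i
  have hh₀val : ∫ ω, h₀ ω * μ₀ ω ∂P = ∫ ω, max (μ₀ ω - η₀ ω) 0 ∂P + (1 - α) * ∫ ω, η₀ ω ∂P := by
    simp_rw [hsplit hh₀m hh₀01 hquant, hh₀pos]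
  have hgap : Integrable (fun ω => max (μ₀ ω - η₀ ω) 0) P := (hμ₀i.sub hη₀i).pos_part
  refine ⟨⟨⟨h₀, hh₀m, hh₀01, hquant, rfl⟩, ?_⟩, ?_⟩
  · rintro r ⟨h, hm, h01, hc, rfl⟩
    refine mul_le_mul_of_nonneg_left ?_ (inv_nonneg.2 hα1.le)
    rw [hsplit hm h01 hc, hh₀val, add_le_add_iff_right]
    exact integral_mono ((hμ₀i.sub hη₀i).mul_of_mem_Icc_s17 (hm.mono hG le_rfl).aestronglyMeasurable
      h01) hgap fun ω => mul_le_max_zero_of_mem_Icc (h01 ω)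
  · rw [hh₀val, integral_add (hgap.const_mul _) hη₀i, integral_const_mul]
    field_simp

/-- Conditional (Z-constrained) strong duality: the worst `(1−α)`-subsample
subject to preserving the distribution of `Z` is obtained by thresholding the
conditional expected loss `μ₀` at its conditional `α`-quantile `η₀`, and the
worst-case risk admits the dual representation. -/
theorem stmt_17 {Ω : Type*} {mΩ : MeasurableSpace Ω} (P : Measure Ω) [IsProbabilityMeasure P]
    (Z G : MeasurableSpace Ω) (hZG : Z ≤ G) (hG : G ≤ mΩ)
    (α : ℝ) (hα : α ∈ Ioo (0 : ℝ) 1)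
    (μ₀ : Ω → ℝ) (hμ₀m : Measurable[G] μ₀) (hμ₀i : Integrable μ₀ P)
    (η₀ : Ω → ℝ) (hη₀m : StronglyMeasurable[Z] η₀) (hη₀i : Integrable η₀ P)
    (hatom : P {ω | μ₀ ω = η₀ ω} = 0)
    (h₀ : Ω → ℝ) (hh₀ : h₀ = fun ω => if η₀ ω < μ₀ ω then 1 else 0)
    (hquant : P[h₀ | Z] =ᵐ[P] fun _ => 1 - α) :
    IsGreatest
      {r : ℝ | ∃ h : Ω → ℝ, Measurable[G] h ∧ (∀ ω, h ω ∈ Icc (0 : ℝ) 1) ∧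
        (P[h | Z] =ᵐ[P] fun _ => 1 - α) ∧
        r = (1 - α)⁻¹ * ∫ ω, h ω * μ₀ ω ∂P}
      ((1 - α)⁻¹ * ∫ ω, h₀ ω * μ₀ ω ∂P) ∧
    (1 - α)⁻¹ * (∫ ω, h₀ ω * μ₀ ω ∂P) =
      ∫ ω, ((1 - α)⁻¹ * max (μ₀ ω - η₀ ω) 0 + η₀ ω) ∂P :=
  stmt_17_general P Z G hZG hG α hα μ₀ hμ₀m hμ₀i η₀ hη₀m hη₀i h₀ hh₀ hquant
end
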